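/- arXiv:2605.26909 — 4 statements merged into one kernel-verified Lean document; each statement's English description precedes it below -/
import Mathlib

section
/- Let M ⊆ E be a smooth embedded submanifold and let g: E → ℝ be locally Lipschitz continuous on an open superset of M. Then for every x̄ ∈ M and every w_M ∈ ∂_M g(x̄) there exists an element w ∈ ∂g(x̄) of the limiting subdifferential such that w_M = proj_{T_x̄M}(w). In particular, the set-valued map x ↦ ∂_M g(x) is locally bounded on M. -/
open Set Filter Topology

noncomputable section

variable {E : Type*} [NormedAddCommGroup E] [InnerProductSpace ℝ E] [FiniteDimensional ℝ E]

open Classical in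
/-- The indicator function of a set `M` (`0` on `M`, `+∞` elsewhere), with values in `EReal`. -/
def indicatorFun (M : Set E) (x : E) : EReal := if x ∈ M then 0 else ⊤

/-- The Fréchet (regular) subdifferential of an extended-real-valued function `g` at `x`. -/
def frechetSubdiff (g : E → EReal) (x : E) : Set E :=
  {v | ∀ ε : ℝ, 0 < ε →
    ∀ᶠ y in 𝓝 x, g x + (((inner ℝ v (y - x) : ℝ) - ε * ‖y - x‖ : ℝ) : EReal) ≤ g y}

/-- The limiting (Mordukhovich) subdifferential of `g` at `x`. -/
def limitingSubdiff (g : E → EReal) (x : E) : Set E :=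
  {v | ∃ xs vs : ℕ → E,
    Tendsto xs atTop (𝓝 x) ∧
    Tendsto (fun n => g (xs n)) atTop (𝓝 (g x)) ∧
    (∀ n, vs n ∈ frechetSubdiff g (xs n)) ∧
    Tendsto vs atTop (𝓝 v)}

/-- The projectional limiting subdifferential of `g` at `x` relative to `M`:
the orthogonal projection onto the tangent space `T x` of the limiting
subdifferential of `g + δ_M` at `x`. -/
def projSubdiff (g : E → ℝ) (M : Set E) (T : E → Submodule ℝ E) (x : E) : Set E :=
  (fun v => ((Submodule.orthogonalProjectionOnto (T x) v : T x) : E)) ''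
    limitingSubdiff (fun y => (g y : EReal) + indicatorFun M y) x

/-- `M ⊆ E` is a smooth embedded submanifold with tangent spaces `T x`: around each
point of `M` there is a `C¹` local defining function with surjective derivative at
that point, and on `M` the tangent space is the kernel of the derivative. -/
def IsSubmanifold (M : Set E) (T : E → Submodule ℝ E) : Prop :=
  ∀ x ∈ M, ∃ (m : ℕ) (U : Set E) (F : E → (Fin m → ℝ)),
    IsOpen U ∧ x ∈ U ∧ ContDiffOn ℝ 1 F U ∧
    Function.Surjective ⇑(fderiv ℝ F x) ∧
    M ∩ U = {y ∈ U | F y = 0} ∧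
    ∀ y ∈ M ∩ U, T y = LinearMap.ker (fderiv ℝ F y : E →ₗ[ℝ] (Fin m → ℝ))

/-- `g` is locally Lipschitz continuous on `O`. -/
def LocLipschitzOn (g : E → ℝ) (O : Set E) : Prop :=
  ∀ x ∈ O, ∃ s ∈ 𝓝 x, ∃ K : NNReal, LipschitzOnWith K g s

/-!
A limiting subgradient `v` of `g + δ_M` at `z` is a limit of Fréchet subgradients `vₖ` of
`g + δ_M` at points `xₖ ∈ M`. A fuzzy sum rule writes each `vₖ`, up to a small error, as
`wₖ + nₖ` with `wₖ` a Fréchet subgradient of `g` and `nₖ` a Fréchet normal to `M`, both at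
points near `xₖ`: minimise `g y - ⟪vₖ, y⟫ + c ‖y - p‖² + μ ‖p - xₖ‖²` over `y` near `xₖ` and
`p ∈ M` near `xₖ`. The `wₖ` are bounded by the Lipschitz constant of `g`, so a subsequence
converges to some `w ∈ ∂g(z)`, and then `nₖ → v - w`. Fréchet normals to a `C¹` submanifold
are orthogonal to its tangent spaces (test them against curves in `M` from the implicit
function theorem), and this passes to the limit since the kernels of the surjective
derivatives vary continuously. So `v - w ⊥ T z`: `v` and `w` have the same projection.
Local boundedness follows as projections do not increase norms.
-/

local notation "⟪" x ", " y "⟫" => @inner ℝ _ _ x y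

open Metric

lemma IsClosed.inter_of_subset {X : Type*} [TopologicalSpace X] {M s t : Set X}
    (hM : IsClosed (M ∩ s)) (ht : IsClosed t) (hts : t ⊆ s) : IsClosed (M ∩ t) := by
  rw [← inter_eq_right.2 hts, ← inter_assoc]
  exact hM.inter ht

section FrechetSubdiff

variable {V : Type*} [NormedAddCommGroup V] [InnerProductSpace ℝ V]

def frechetNormalCone (M : Set V) (p : V) : Set V :=
  {n | ∀ ε > 0, ∀ᶠ q in 𝓝[M] p, ⟪n, q - p⟫ ≤ ε * ‖q - p‖}

lemma mem_frechetSubdiff_coe_iff {g : V → ℝ} {x v : V} :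
    v ∈ frechetSubdiff (fun y => (g y : EReal)) x ↔
      ∀ ε > 0, ∀ᶠ y in 𝓝 x, g x + (⟪v, y - x⟫ - ε * ‖y - x‖) ≤ g y := by
  refine forall₂_congr fun ε _ => eventually_congr (Eventually.of_forall fun y => ?_)
  rw [← EReal.coe_add, EReal.coe_le_coe_iff]

lemma norm_le_of_mem_frechetSubdiff {g : V → ℝ} {K : NNReal} {s : Set V} {x w : V}
    (hs : s ∈ 𝓝 x) (hg : LipschitzOnWith K g s)
    (hw : w ∈ frechetSubdiff (fun y => (g y : EReal)) x) : ‖w‖ ≤ K := by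
  rcases eq_or_ne w 0 with rfl | hw0
  · simp
  refine le_of_forall_pos_le_add fun ε hε => ?_
  have hray : Tendsto (fun τ : ℝ => x + τ • w) (𝓝[>] 0) (𝓝 x) := by
    have : Continuous fun τ : ℝ => x + τ • w := by fun_prop
    simpa using (this.tendsto 0).mono_left nhdsWithin_le_nhds
  obtain ⟨τ, hsub, hτs, hτ : 0 < τ⟩ :=
    ((hray.eventually (mem_frechetSubdiff_coe_iff.1 hw ε hε)).and
      ((hray.eventually hs).and self_mem_nhdsWithin)).exists
  have hlip : g (x + τ • w) - g x ≤ K * (τ * ‖w‖) := by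
    have := hg.dist_le_mul _ hτs _ (mem_of_mem_nhds hs)
    rw [Real.dist_eq, dist_eq_norm, add_sub_cancel_left, norm_smul,
      Real.norm_of_nonneg hτ.le] at this
    exact (le_abs_self _).trans this
  rw [add_sub_cancel_left, real_inner_smul_right, real_inner_self_eq_norm_sq, norm_smul,
    Real.norm_of_nonneg hτ.le] at hsub
  have hpos : 0 < τ * ‖w‖ := mul_pos hτ (norm_pos_iff.2 hw0)
  nlinarith

lemma norm_le_of_mem_limitingSubdiff {g : V → ℝ} {K : NNReal} {s : Set V} {x w : V}
    (hs : IsOpen s) (hx : x ∈ s) (hg : LipschitzOnWith K g s)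
    (hw : w ∈ limitingSubdiff (fun y => (g y : EReal)) x) : ‖w‖ ≤ K := by
  obtain ⟨xs, ws, hxs, -, hws, hlim⟩ := hw
  refine le_of_tendsto hlim.norm ?_
  filter_upwards [hxs.eventually_mem (hs.mem_nhds hx)] with n hn
  exact norm_le_of_mem_frechetSubdiff (hs.mem_nhds hn) hg (hws n)

lemma eventually_abs_sub_sub_inner_le {φ : V → ℝ} {u p : V}
    (hφ : HasFDerivAt φ (innerSL ℝ u) p) {ε : ℝ} (hε : 0 < ε) :
    ∀ᶠ q in 𝓝 p, |φ q - φ p - ⟪u, q - p⟫| ≤ ε * ‖q - p‖ := by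
  simpa using hφ.isLittleO.def hε

lemma mem_frechetSubdiff_of_isLocalMin_sub {g φ : V → ℝ} {u y : V}
    (hφ : HasFDerivAt φ (innerSL ℝ u) y) (hmin : IsLocalMin (fun z => g z - φ z) y) :
    u ∈ frechetSubdiff (fun z => (g z : EReal)) y := by
  refine mem_frechetSubdiff_coe_iff.2 fun ε hε => ?_
  filter_upwards [hmin, eventually_abs_sub_sub_inner_le hφ hε] with z hz hφz
  linarith [neg_abs_le (φ z - φ y - ⟪u, z - y⟫)]

lemma neg_mem_frechetNormalCone_of_isLocalMinOn {M : Set V} {φ : V → ℝ} {u p : V}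
    (hφ : HasFDerivAt φ (innerSL ℝ u) p) (hmin : IsLocalMinOn φ M p) :
    -u ∈ frechetNormalCone M p := by
  intro ε hε
  filter_upwards [hmin, nhdsWithin_le_nhds (eventually_abs_sub_sub_inner_le hφ hε)]
    with q hq hφq
  rw [inner_neg_left]
  linarith [le_abs_self (φ q - φ p - ⟪u, q - p⟫)]

lemma inner_nonpos_of_mem_frechetNormalCone {M : Set V} {p n t : V} {γ : ℝ → V}
    (hn : n ∈ frechetNormalCone M p) (hγ : HasDerivAt γ t 0) (hγ0 : γ 0 = p)
    (hγM : ∀ᶠ s in 𝓝 0, γ s ∈ M) : ⟪n, t⟫ ≤ 0 := by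
  have hslope : Tendsto (slope γ 0) (𝓝[>] 0) (𝓝 t) :=
    (hasDerivAt_iff_tendsto_slope.1 hγ).mono_left (nhdsGT_le_nhdsNE 0)
  have hγp : Tendsto γ (𝓝[>] 0) (𝓝[M] p) := tendsto_nhdsWithin_iff.2
    ⟨hγ0 ▸ hγ.continuousAt.tendsto.mono_left nhdsWithin_le_nhds, nhdsWithin_le_nhds hγM⟩
  have hbound : ∀ ε > 0, ⟪n, t⟫ ≤ ε * ‖t‖ := by
    intro ε hε
    refine le_of_tendsto_of_tendsto (tendsto_const_nhds.inner hslope)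
      (hslope.norm.const_mul ε) ?_
    filter_upwards [hγp.eventually (hn ε hε), self_mem_nhdsWithin] with s hs (hs0 : 0 < s)
    rw [slope_def_module, sub_zero, hγ0, real_inner_smul_right, norm_smul,
      Real.norm_of_nonneg (inv_nonneg.2 hs0.le)]
    calc s⁻¹ * ⟪n, γ s - p⟫ ≤ s⁻¹ * (ε * ‖γ s - p‖) :=
          mul_le_mul_of_nonneg_left hs (inv_nonneg.2 hs0.le)
      _ = ε * (s⁻¹ * ‖γ s - p‖) := by ring
  have hlim : Tendsto (fun ε : ℝ => ε * ‖t‖) (𝓝[>] 0) (𝓝 0) := by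
    have : Tendsto (fun ε : ℝ => ε * ‖t‖) (𝓝 0) (𝓝 0) := by
      simpa using (tendsto_id (x := 𝓝 (0 : ℝ))).mul_const ‖t‖
    exact this.mono_left nhdsWithin_le_nhds
  exact ge_of_tendsto hlim (eventually_nhdsWithin_of_forall hbound)

end FrechetSubdiff

section Submanifold

variable {V : Type*} [NormedAddCommGroup V] [InnerProductSpace ℝ V]
  {M : Set V} {T : V → Submodule ℝ V}

lemma exists_hasDerivAt_of_mem_ker [CompleteSpace V] {G : Type*} [NormedAddCommGroup G]
    [NormedSpace ℝ G] [FiniteDimensional ℝ G] {F : V → G} {f' : V →L[ℝ] G} {p t : V}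
    (hF : HasStrictFDerivAt F f' p) (hsurj : Function.Surjective f') (ht : f' t = 0) :
    ∃ γ : ℝ → V, γ 0 = p ∧ HasDerivAt γ t 0 ∧ ∀ᶠ s in 𝓝 0, F (γ s) = F p := by
  have hrange : f'.range = ⊤ := LinearMap.range_eq_top.2 hsurj
  have hker := f'.ker_closedComplemented_of_finiteDimensional_range
  set ψ := hF.implicitFunctionOfComplemented F f' hrange hker (F p)
  set t' : f'.ker := ⟨t, ht⟩
  have hψ : HasFDerivAt ψ f'.ker.subtypeL ((0 : ℝ) • t') := by
    simpa using (hF.to_implicitFunctionOfComplemented hrange hker).hasFDerivAt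
  have hline : HasDerivAt (fun s : ℝ => s • t') t' 0 := by
    simpa using (hasDerivAt_id (0 : ℝ)).smul_const t'
  refine ⟨fun s => ψ (s • t'), by simp [ψ],
    by simpa [t', Function.comp_def] using hψ.comp_hasDerivAt 0 hline, ?_⟩
  have hpair : Tendsto (fun s : ℝ => (F p, s • t')) (𝓝 0) (𝓝 (F p, 0)) :=
    tendsto_const_nhds.prodMk_nhds (by simpa using hline.continuousAt.tendsto)
  exact hpair.eventually (hF.map_implicitFunctionOfComplemented_eq hrange hker)

lemma exists_tendsto_of_mem_ker {X G : Type*} [TopologicalSpace X] [NormedAddCommGroup G]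
    [NormedSpace ℝ G] [FiniteDimensional ℝ G] {L : X → V →L[ℝ] G} {z : X}
    (hL : ContinuousAt L z) (hsurj : Function.Surjective (L z)) {t : V} (ht : L z t = 0) :
    ∃ κ : X → V, Tendsto κ (𝓝 z) (𝓝 t) ∧ ∀ᶠ y in 𝓝 z, L y (κ y) = 0 := by
  obtain ⟨R, hR⟩ := (L z).exists_rightInverse_of_surjective (LinearMap.range_eq_top.2 hsurj)
  set A : X → G →L[ℝ] G := fun y => (L y).comp R
  have hAz : A z = 1 := hR
  have hA : ContinuousAt A z := hL.clm_comp (continuousAt_const (y := R))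
  have hinv : ContinuousAt (fun y => Ring.inverse (A y)) z := by
    have h1 : ContinuousAt Ring.inverse (A z) := by
      simpa [hAz] using NormedRing.inverse_continuousAt (1 : (G →L[ℝ] G)ˣ)
    exact h1.comp hA
  -- `L y ∘ R` is invertible near `z`, and this correction moves `t` into `ker (L y)`.
  set κ : X → V := fun y => t - R (Ring.inverse (A y) (L y t))
  have hκ : ContinuousAt κ z := continuousAt_const.sub
    (R.continuous.continuousAt.comp (hinv.clm_apply (hL.clm_apply continuousAt_const)))
  refine ⟨κ, by simpa [κ, ht] using hκ.tendsto, ?_⟩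
  filter_upwards [hA.eventually (Units.isOpen.mem_nhds (hAz ▸ isUnit_one))] with y hy
  have : A y (Ring.inverse (A y) (L y t)) = L y t := by
    rw [← mul_apply_eq_comp, Ring.mul_inverse_cancel _ hy, one_apply_eq_self]
  simp only [κ, map_sub, sub_eq_zero]
  exact this.symm

lemma IsSubmanifold.exists_isClosed_inter_closedBall (hM : IsSubmanifold M T) {z : V}
    (hz : z ∈ M) {s : Set V} (hs : s ∈ 𝓝 z) :
    ∃ r > 0, closedBall z r ⊆ s ∧ IsClosed (M ∩ closedBall z r) := by
  obtain ⟨m, U, F, hU, hzU, hF, -, hMU, -⟩ := hM z hz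
  obtain ⟨r, hr, hrU⟩ := nhds_basis_closedBall.mem_iff.1 (inter_mem hs (hU.mem_nhds hzU))
  refine ⟨r, hr, hrU.trans inter_subset_left, ?_⟩
  have hlevel : M ∩ closedBall z r = closedBall z r ∩ F ⁻¹' {0} := by
    ext y
    constructor
    · rintro ⟨hyM, hyB⟩
      exact ⟨hyB, (hMU.subset ⟨hyM, (hrU hyB).2⟩).2⟩
    · rintro ⟨hyB, hyF⟩
      exact ⟨(hMU.superset ⟨(hrU hyB).2, hyF⟩).1, hyB⟩
  rw [hlevel]
  exact (hF.continuousOn.mono (hrU.trans inter_subset_right)).preimage_isClosed_of_isClosed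
    isClosed_closedBall isClosed_singleton

lemma IsSubmanifold.mem_orthogonal_of_mem_frechetNormalCone [CompleteSpace V]
    (hM : IsSubmanifold M T) {p n : V} (hp : p ∈ M) (hn : n ∈ frechetNormalCone M p) :
    n ∈ (T p)ᗮ := by
  obtain ⟨m, U, F, hU, hpU, hF, hsurj, hMU, hT⟩ := hM p hp
  have hF' : HasStrictFDerivAt F (fderiv ℝ F p) p :=
    (hF.contDiffAt (hU.mem_nhds hpU)).hasStrictFDerivAt one_ne_zero
  have hFp : F p = 0 := (hMU.subset ⟨hp, hpU⟩).2
  have hnonpos : ∀ t ∈ T p, ⟪n, t⟫ ≤ 0 := by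
    intro t ht
    rw [hT p ⟨hp, hpU⟩] at ht
    obtain ⟨γ, hγ0, hγ, hγF⟩ := exists_hasDerivAt_of_mem_ker hF' hsurj ht
    refine inner_nonpos_of_mem_frechetNormalCone hn hγ hγ0 ?_
    filter_upwards [hγF, hγ.continuousAt.preimage_mem_nhds (hγ0 ▸ hU.mem_nhds hpU)]
      with s hsF hsU
    exact (hMU.superset ⟨hsU, hsF.trans hFp⟩).1
  refine (Submodule.mem_orthogonal' _ _).2 fun t ht => le_antisymm (hnonpos t ht) ?_
  simpa [inner_neg_right] using hnonpos (-t) (neg_mem ht)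

lemma IsSubmanifold.mem_orthogonal_of_tendsto (hM : IsSubmanifold M T) {z : V} (hz : z ∈ M)
    {ι : Type*} {l : Filter ι} [l.NeBot] {p n : ι → V} {n₀ : V} (hpM : ∀ i, p i ∈ M)
    (hp : Tendsto p l (𝓝 z)) (hn : ∀ i, n i ∈ (T (p i))ᗮ) (hn₀ : Tendsto n l (𝓝 n₀)) :
    n₀ ∈ (T z)ᗮ := by
  obtain ⟨m, U, F, hU, hzU, hF, hsurj, -, hT⟩ := hM z hz
  refine (Submodule.mem_orthogonal' _ _).2 fun t ht => ?_
  rw [hT z ⟨hz, hzU⟩] at ht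
  have hL : ContinuousAt (fderiv ℝ F) z :=
    (hF.continuousOn_fderiv_of_isOpen hU le_rfl).continuousAt (hU.mem_nhds hzU)
  obtain ⟨κ, hκ, hκker⟩ := exists_tendsto_of_mem_ker hL hsurj ht
  have hzero : ∀ᶠ i in l, ⟪n i, κ (p i)⟫ = 0 := by
    filter_upwards [hp.eventually hκker, hp.eventually (hU.mem_nhds hzU)] with i hker hpU
    refine (Submodule.mem_orthogonal' _ _).1 (hn i) _ ?_
    rw [hT _ ⟨hpM i, hpU⟩]
    exact hker
  exact tendsto_nhds_unique (hn₀.inner (hκ.comp hp))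
    (tendsto_const_nhds.congr' (hzero.mono fun _ h => h.symm))

end Submanifold

section DoublingPenalty

variable {V : Type*} [NormedAddCommGroup V] [InnerProductSpace ℝ V] {M : Set V} {g : V → ℝ}

lemma eventually_le_of_mem_frechetSubdiff_add_indicatorFun {x v : V} (hx : x ∈ M)
    (hv : v ∈ frechetSubdiff (fun y => (g y : EReal) + indicatorFun M y) x) {ε : ℝ}
    (hε : 0 < ε) : ∀ᶠ q in 𝓝[M] x, g x + (⟪v, q - x⟫ - ε * ‖q - x‖) ≤ g q := by
  filter_upwards [nhdsWithin_le_nhds (hv ε hε), self_mem_nhdsWithin] with q hq hqM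
  simp only [indicatorFun, hx, hqM, if_true, add_zero] at hq
  exact_mod_cast hq

def doublingPenalty (g : V → ℝ) (v x : V) (c μ : ℝ) (q : V × V) : ℝ :=
  g q.1 - ⟪v, q.1⟫ + c * ‖q.1 - q.2‖ ^ 2 + μ * ‖q.2 - x‖ ^ 2

variable {v x y p : V} {c μ R : ℝ}

lemma mem_frechetSubdiff_of_isMinOn_doublingPenalty
    (hmin : IsMinOn (doublingPenalty g v x c μ) (closedBall x R ×ˢ (M ∩ closedBall x R)) (y, p))
    (hp : p ∈ M ∩ closedBall x R) (hy : dist y x < R) :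
    v - (2 * c) • (y - p) ∈ frechetSubdiff (fun z => (g z : EReal)) y := by
  have hφ : HasFDerivAt (fun z => ⟪v, z⟫ - c * ‖z - p‖ ^ 2)
      (innerSL ℝ (v - (2 * c) • (y - p))) y := by
    refine ((innerSL ℝ v).hasFDerivAt.sub
      (((hasFDerivAt_id y).sub_const p).norm_sq.const_mul c)).congr_fderiv ?_
    ext u
    simp only [id_eq, map_sub, ContinuousLinearMap.comp_id, sub_apply, coe_innerSL_apply,
      smul_apply, nsmul_eq_mul, Nat.cast_ofNat, smul_eq_mul, map_smul]
    ring
  refine mem_frechetSubdiff_of_isLocalMin_sub hφ ?_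
  filter_upwards [isOpen_ball.mem_nhds (mem_ball.2 hy)] with z hz
  have := isMinOn_iff.1 hmin (z, p) ⟨ball_subset_closedBall hz, hp⟩
  simp only [doublingPenalty] at this
  linarith

lemma mem_frechetNormalCone_of_isMinOn_doublingPenalty
    (hmin : IsMinOn (doublingPenalty g v x c μ) (closedBall x R ×ˢ (M ∩ closedBall x R)) (y, p))
    (hy : y ∈ closedBall x R) (hp : dist p x < R) :
    (2 * c) • (y - p) - (2 * μ) • (p - x) ∈ frechetNormalCone M p := by
  have hφ : HasFDerivAt (fun q => c * ‖y - q‖ ^ 2 + μ * ‖q - x‖ ^ 2)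
      (innerSL ℝ ((2 * μ) • (p - x) - (2 * c) • (y - p))) p := by
    refine ((((hasFDerivAt_id p).const_sub y).norm_sq.const_mul c).add
      (((hasFDerivAt_id p).sub_const x).norm_sq.const_mul μ)).congr_fderiv ?_
    ext u
    simp only [id_eq, map_sub, ContinuousLinearMap.comp_neg, ContinuousLinearMap.comp_id,
      neg_sub, add_apply, smul_apply, sub_apply, coe_innerSL_apply, nsmul_eq_mul,
      Nat.cast_ofNat, smul_eq_mul, map_smul]
    ring
  have hmin' : IsLocalMinOn (fun q => c * ‖y - q‖ ^ 2 + μ * ‖q - x‖ ^ 2) M p := by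
    filter_upwards [inter_mem_nhdsWithin M (isOpen_ball.mem_nhds (mem_ball.2 hp))]
      with q ⟨hqM, hq⟩
    have := isMinOn_iff.1 hmin (y, q) ⟨hy, hqM, ball_subset_closedBall hq⟩
    simp only [doublingPenalty] at this
    linarith
  simpa using neg_mem_frechetNormalCone_of_isLocalMinOn hφ hmin'

lemma doublingPenalty_estimate {ε : ℝ} {K : NNReal} (hx : x ∈ M) (hR : 0 ≤ R)
    (hg : LipschitzOnWith K g (closedBall x R))
    (hv : ∀ q ∈ M ∩ closedBall x R, g x + (⟪v, q - x⟫ - ε * ‖q - x‖) ≤ g q)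
    (hmin : IsMinOn (doublingPenalty g v x c μ) (closedBall x R ×ˢ (M ∩ closedBall x R)) (y, p))
    (hy : y ∈ closedBall x R) (hp : p ∈ M ∩ closedBall x R) :
    c * ‖y - p‖ ^ 2 + μ * ‖p - x‖ ^ 2 ≤ (K + ‖v‖) * ‖y - p‖ + ε * ‖p - x‖ := by
  have hxB : x ∈ closedBall x R := mem_closedBall_self hR
  have hxx := isMinOn_iff.1 hmin (x, x) ⟨hxB, hx, hxB⟩
  have hlip : g p - g y ≤ K * ‖y - p‖ := by
    have := hg.dist_le_mul p hp.2 y hy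
    rw [Real.dist_eq, dist_eq_norm'] at this
    exact (le_abs_self _).trans this
  have hinner : ⟪v, y - p⟫ ≤ ‖v‖ * ‖y - p‖ := real_inner_le_norm v (y - p)
  have hvp := hv p hp
  simp only [doublingPenalty, sub_self, norm_zero] at hxx
  rw [inner_sub_right] at hinner hvp
  linarith

lemma exists_isMinOn_doublingPenalty [ProperSpace V] (hx : x ∈ M) (hR : 0 ≤ R)
    (hg : ContinuousOn g (closedBall x R)) (hM : IsClosed (M ∩ closedBall x R)) (v : V)
    (c μ : ℝ) :
    ∃ y p, y ∈ closedBall x R ∧ p ∈ M ∩ closedBall x R ∧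
      IsMinOn (doublingPenalty g v x c μ) (closedBall x R ×ˢ (M ∩ closedBall x R)) (y, p) := by
  have hg' : ContinuousOn (fun q : V × V => g q.1) (closedBall x R ×ˢ (M ∩ closedBall x R)) :=
    hg.comp continuousOn_fst fun q hq => hq.1
  have hcont : ContinuousOn (doublingPenalty g v x c μ)
      (closedBall x R ×ˢ (M ∩ closedBall x R)) :=
    ((hg'.sub (by fun_prop)).add (by fun_prop)).add (by fun_prop)
  obtain ⟨⟨y, p⟩, ⟨hy, hp⟩, hmin⟩ := ((isCompact_closedBall x R).prod
    ((isCompact_closedBall x R).of_isClosed_subset hM inter_subset_right)).exists_isMinOn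
    ⟨(x, x), mem_closedBall_self hR, hx, mem_closedBall_self hR⟩ hcont
  exact ⟨y, p, hy, hp, hmin⟩

lemma doublingPenalty_bounds {a b c μ C θ η : ℝ} (hR : 0 < R) (hη : 0 < η) (hC : 0 ≤ C)
    (hθ : 0 < θ) (hθC : (C + 1) * θ ≤ R * η / 32)
    (hcθ : c * θ ^ 2 = 2 * R * C + η / 16 * R + 1) (hμR : μ * R = η / 4) (ha : 0 ≤ a)
    (haR : a ≤ 2 * R) (hb : 0 ≤ b) (hbR : b ≤ R)
    (h : c * a ^ 2 + μ * b ^ 2 ≤ C * a + η / 16 * b) : a < θ ∧ b < R / 2 := by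
  have hc : 0 < c := by
    by_contra! hc
    nlinarith [mul_nonpos_of_nonpos_of_nonneg hc (sq_nonneg θ), mul_nonneg hR.le hC]
  have hμ : 0 < μ := by
    by_contra! hμ
    nlinarith [mul_nonpos_of_nonpos_of_nonneg hμ hR.le]
  have haθ : a < θ := by
    have hca : c * a ^ 2 < c * θ ^ 2 := by
      nlinarith [mul_le_mul_of_nonneg_left haR hC, mul_le_mul_of_nonneg_left hbR
        (by positivity : (0 : ℝ) ≤ η / 16), mul_nonneg hμ.le (sq_nonneg b)]
    exact (pow_lt_pow_iff_left₀ ha hθ.le two_ne_zero).1 (lt_of_mul_lt_mul_left hca hc.le)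
  refine ⟨haθ, ?_⟩
  by_contra! hbR2
  have hμb : η / 8 * b ≤ μ * b ^ 2 := by
    have hsplit : μ * b ^ 2 = μ * b * (b - R / 2) + μ * R * b / 2 := by ring
    rw [hsplit, hμR]
    nlinarith [mul_nonneg (mul_nonneg hμ.le hb) (sub_nonneg.2 hbR2)]
  linarith [mul_le_mul_of_nonneg_left haθ.le hC, mul_le_mul_of_nonneg_left hbR2 hη.le,
    mul_nonneg hc.le (sq_nonneg a)]

end DoublingPenalty

lemma tendsto_of_dist_lt_one_div {X : Type*} [PseudoMetricSpace X] {u : ℕ → X} {a : X}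
    (h : ∀ j, dist (u j) a < 1 / ((j : ℝ) + 1)) : Tendsto u atTop (𝓝 a) :=
  tendsto_iff_dist_tendsto_zero.2 (squeeze_zero (fun _ => dist_nonneg) (fun j => (h j).le)
    tendsto_one_div_add_atTop_nhds_zero_nat)

section FuzzySumRule

variable {V : Type*} [NormedAddCommGroup V] [InnerProductSpace ℝ V] [ProperSpace V]
  {M : Set V} {g : V → ℝ}

theorem exists_frechetSubdiff_add_frechetNormalCone_near {x v : V} {K : NNReal} {r : ℝ}
    (hr : 0 < r) (hx : x ∈ M) (hg : LipschitzOnWith K g (closedBall x r))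
    (hM : IsClosed (M ∩ closedBall x r))
    (hv : v ∈ frechetSubdiff (fun y => (g y : EReal) + indicatorFun M y) x) {η : ℝ}
    (hη : 0 < η) :
    ∃ y w p n, dist y x < η ∧ p ∈ M ∧ dist p x < η ∧
      w ∈ frechetSubdiff (fun z => (g z : EReal)) y ∧ n ∈ frechetNormalCone M p ∧
      dist (w + n) v < η := by
  obtain ⟨δ, hδ, hvδ⟩ := Metric.eventually_nhds_iff.1 (eventually_nhdsWithin_iff.1
    (eventually_le_of_mem_frechetSubdiff_add_indicatorFun hx hv (by positivity : 0 < η / 16)))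
  set R := min r (min (δ / 2) η)
  have hR : 0 < R := by positivity
  have hRr : R ≤ r := min_le_left _ _
  have hRδ : R < δ := (min_le_right _ _).trans_lt ((min_le_left _ _).trans_lt (half_lt_self hδ))
  have hRη : R ≤ η := (min_le_right _ _).trans (min_le_right _ _)
  -- `c` forces `‖y - p‖ < θ`, which with the tolerance `η / 16` of `v` at `x` keeps `p` in
  -- `ball x (R / 2)` and `y` in `ball x R`; `μ` makes the normal error `2 μ ‖p - x‖` small.
  set C := (K : ℝ) + ‖v‖
  set θ := min (R / 2) (R * η / (32 * (C + 1)))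
  set c := (2 * R * C + η / 16 * R + 1) / θ ^ 2
  set μ := η / (4 * R)
  have hμR : μ * R = η / 4 := by simp only [μ]; field_simp
  obtain ⟨y, p, hy, hp, hmin⟩ := exists_isMinOn_doublingPenalty hx hR.le
    (hg.continuousOn.mono (closedBall_subset_closedBall hRr))
    (hM.inter_of_subset isClosed_closedBall (closedBall_subset_closedBall hRr)) v c μ
  have hyR : ‖y - x‖ ≤ R := mem_closedBall_iff_norm.1 hy
  have hpR : ‖p - x‖ ≤ R := mem_closedBall_iff_norm.1 hp.2
  have hyp : ‖y - p‖ ≤ 2 * R := by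
    linarith [norm_sub_le_norm_sub_add_norm_sub y x p, norm_sub_rev x p]
  obtain ⟨hyθ, hpx⟩ := doublingPenalty_bounds hR hη (by positivity) (by positivity)
    ((le_div_iff₀' (by positivity)).1 ((min_le_right _ _).trans_eq (div_div _ _ _).symm))
    (div_mul_cancel₀ _ (by positivity)) hμR (norm_nonneg _) hyp (norm_nonneg _) hpR
    (doublingPenalty_estimate hx hR.le (hg.mono (closedBall_subset_closedBall hRr))
      (fun q hq => hvδ (hq.2.trans_lt hRδ) hq.1) hmin hy hp)
  have hyx : dist y x < R := by
    linarith [dist_triangle y p x, dist_eq_norm y p, dist_eq_norm p x,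
      min_le_left (R / 2) (R * η / (32 * (C + 1)))]
  refine ⟨y, v - (2 * c) • (y - p), p, (2 * c) • (y - p) - (2 * μ) • (p - x),
    hyx.trans_le hRη, hp.1, ?_, mem_frechetSubdiff_of_isMinOn_doublingPenalty hmin hp hyx,
    mem_frechetNormalCone_of_isMinOn_doublingPenalty hmin hy ?_, ?_⟩
  · rw [dist_eq_norm]; linarith
  · rw [dist_eq_norm]; linarith
  · rw [dist_eq_norm, show v - (2 * c) • (y - p) + ((2 * c) • (y - p) - (2 * μ) • (p - x)) - v
      = -((2 * μ) • (p - x)) by abel, norm_neg, norm_smul, Real.norm_of_nonneg (by positivity)]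
    nlinarith [(by positivity : (0 : ℝ) < μ)]

lemma exists_seq_of_mem_limitingSubdiff_add_indicatorFun {z v : V} {K : NNReal} {r : ℝ}
    (hr : 0 < r) (hz : z ∈ M) (hg : LipschitzOnWith K g (closedBall z r))
    (hM : IsClosed (M ∩ closedBall z r))
    (hv : v ∈ limitingSubdiff (fun y => (g y : EReal) + indicatorFun M y) z) :
    ∃ y w p n : ℕ → V, Tendsto y atTop (𝓝 z) ∧ (∀ j, p j ∈ M) ∧ Tendsto p atTop (𝓝 z) ∧
      (∀ j, w j ∈ frechetSubdiff (fun x => (g x : EReal)) (y j)) ∧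
      (∀ j, n j ∈ frechetNormalCone M (p j)) ∧ Tendsto (fun j => w j + n j) atTop (𝓝 v) := by
  obtain ⟨xs, vs, hxs, hgxs, hvs, hvlim⟩ := hv
  have hxM : ∀ᶠ k in atTop, xs k ∈ M := by
    simp only [indicatorFun, hz, if_true, add_zero] at hgxs
    filter_upwards [hgxs.eventually (gt_mem_nhds (EReal.coe_lt_top (g z)))] with k hk
    by_contra hkM
    simp [hkM] at hk
  have happrox : ∀ j : ℕ, ∃ y w p n, dist y z < 1 / ((j : ℝ) + 1) ∧ p ∈ M ∧
      dist p z < 1 / ((j : ℝ) + 1) ∧ w ∈ frechetSubdiff (fun x => (g x : EReal)) y ∧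
      n ∈ frechetNormalCone M p ∧ dist (w + n) v < 1 / ((j : ℝ) + 1) := by
    intro j
    set η : ℝ := 1 / ((j : ℝ) + 1) / 2
    have hη : 0 < η := by positivity
    have hηη : η + η = 1 / ((j : ℝ) + 1) := by simp only [η]; ring
    obtain ⟨k, hkM, hkz, hkv⟩ := (hxM.and ((hxs.eventually (ball_mem_nhds z
      (lt_min (half_pos hr) hη))).and (hvlim.eventually (ball_mem_nhds v hη)))).exists
    have hkz' := lt_min_iff.1 (mem_ball.1 hkz)
    have hball : closedBall (xs k) (r / 2) ⊆ closedBall z r :=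
      closedBall_subset_closedBall' (by linarith)
    obtain ⟨y, w, p, n, hy, hp, hpk, hw, hn, hwn⟩ :=
      exists_frechetSubdiff_add_frechetNormalCone_near (half_pos hr) hkM (hg.mono hball)
        (hM.inter_of_subset isClosed_closedBall hball) (hvs k) hη
    refine ⟨y, w, p, n, ?_, hp, ?_, hw, hn, ?_⟩
    · linarith [dist_triangle y (xs k) z]
    · linarith [dist_triangle p (xs k) z]
    · linarith [dist_triangle (w + n) (vs k) v, mem_ball.1 hkv]
  choose y w p n hy hpM hp hw hn hwn using happrox
  exact ⟨y, w, p, n, tendsto_of_dist_lt_one_div hy, hpM, tendsto_of_dist_lt_one_div hp, hw, hn,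
    tendsto_of_dist_lt_one_div hwn⟩

end FuzzySumRule

theorem IsSubmanifold.exists_mem_limitingSubdiff_sub_mem_orthogonal {V : Type*}
    [NormedAddCommGroup V] [InnerProductSpace ℝ V] [FiniteDimensional ℝ V] {M : Set V}
    {T : V → Submodule ℝ V} (hM : IsSubmanifold M T) {g : V → ℝ} {z : V} (hz : z ∈ M)
    {s : Set V} (hs : s ∈ 𝓝 z) {K : NNReal} (hg : LipschitzOnWith K g s) {v : V}
    (hv : v ∈ limitingSubdiff (fun y => (g y : EReal) + indicatorFun M y) z) :
    ∃ w ∈ limitingSubdiff (fun y => (g y : EReal)) z, v - w ∈ (T z)ᗮ := by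
  obtain ⟨r, hr, hrs, hMr⟩ := hM.exists_isClosed_inter_closedBall hz hs
  obtain ⟨y, w, p, n, hy, hpM, hp, hw, hn, hwn⟩ :=
    exists_seq_of_mem_limitingSubdiff_add_indicatorFun hr hz (hg.mono hrs) hMr hv
  have hwK : ∀ᶠ j in atTop, w j ∈ closedBall 0 K := by
    filter_upwards [hy.eventually (isOpen_ball.mem_nhds (mem_ball_self hr))] with j hj
    exact mem_closedBall_zero_iff.2 (norm_le_of_mem_frechetSubdiff (isOpen_ball.mem_nhds hj)
      (hg.mono (ball_subset_closedBall.trans hrs)) (hw j))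
  obtain ⟨w₀, -, φ, hφ, hwφ⟩ :=
    tendsto_subseq_of_frequently_bounded isBounded_closedBall hwK.frequently
  have hφ' := hφ.tendsto_atTop
  refine ⟨w₀, ⟨y ∘ φ, w ∘ φ, hy.comp hφ', ?_, fun j => hw (φ j), hwφ⟩, ?_⟩
  · exact (continuous_coe_real_ereal.tendsto _).comp
      (((hg.continuousOn.continuousAt hs).tendsto).comp (hy.comp hφ'))
  · refine hM.mem_orthogonal_of_tendsto hz (fun j => hpM (φ j)) (hp.comp hφ')
      (fun j => hM.mem_orthogonal_of_mem_frechetNormalCone (hpM (φ j)) (hn (φ j))) ?_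
    simpa using (hwn.comp hφ').sub hwφ

theorem stmt0_general (M : Set E) (T : E → Submodule ℝ E) (hM : IsSubmanifold M T)
    (g : E → ℝ) (O : Set E) (hMO : M ⊆ O)
    (hlip : LocLipschitzOn g O) :
    (∀ z ∈ M, ∀ wM ∈ projSubdiff g M T z,
      ∃ w ∈ limitingSubdiff (fun y => (g y : EReal)) z,
        wM = ((Submodule.orthogonalProjectionOnto (T z) w : T z) : E)) ∧
    (∀ z ∈ M, ∃ ρ > (0:ℝ), ∃ c : ℝ, ∀ x ∈ M, ‖x - z‖ < ρ →
      ∀ v ∈ projSubdiff g M T x, ‖v‖ ≤ c) := by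
  have hproj : ∀ z ∈ M, ∀ wM ∈ projSubdiff g M T z,
      ∃ w ∈ limitingSubdiff (fun y => (g y : EReal)) z,
        wM = ((Submodule.orthogonalProjectionOnto (T z) w : T z) : E) := by
    rintro z hz _ ⟨v, hv, rfl⟩
    obtain ⟨s, hs, K, hK⟩ := hlip z (hMO hz)
    obtain ⟨w, hw, hvw⟩ := hM.exists_mem_limitingSubdiff_sub_mem_orthogonal hz hs hK hv
    refine ⟨w, hw, ?_⟩
    rw [← sub_eq_zero, ← Submodule.coe_sub, ← map_sub,
      Submodule.orthogonalProjectionOnto_apply_of_mem_orthogonal hvw, Submodule.coe_zero]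
  refine ⟨hproj, fun z hz => ?_⟩
  obtain ⟨s, hs, K, hK⟩ := hlip z (hMO hz)
  obtain ⟨ρ, hρ, hρs⟩ := Metric.mem_nhds_iff.1 hs
  refine ⟨ρ, hρ, K, fun x hx hxz _ hwM => ?_⟩
  obtain ⟨w, hw, rfl⟩ := hproj x hx _ hwM
  exact (Submodule.norm_orthogonalProjectionOnto_apply_le _ w).trans
    (norm_le_of_mem_limitingSubdiff isOpen_ball (mem_ball_iff_norm.2 hxz) (hK.mono hρs) hw)

/-- Every element of the projectional subdifferential is the projection of some
limiting subgradient; in particular `x ↦ ∂_M g(x)` is locally bounded on `M`. -/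
theorem stmt0 (M : Set E) (T : E → Submodule ℝ E) (hM : IsSubmanifold M T)
    (g : E → ℝ) (O : Set E) (hO : IsOpen O) (hMO : M ⊆ O)
    (hlip : LocLipschitzOn g O) :
    (∀ z ∈ M, ∀ wM ∈ projSubdiff g M T z,
      ∃ w ∈ limitingSubdiff (fun y => (g y : EReal)) z,
        wM = ((Submodule.orthogonalProjectionOnto (T z) w : T z) : E)) ∧
    (∀ z ∈ M, ∃ ρ > (0:ℝ), ∃ c : ℝ, ∀ x ∈ M, ‖x - z‖ < ρ →
      ∀ v ∈ projSubdiff g M T x, ‖v‖ ≤ c) :=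
  stmt0_general M T hM g O hMO hlip

end
end

section
/- Suppose φ: M → ℝ satisfies Assumption A1 with respect to a retraction R on the smooth embedded submanifold M ⊆ E. Let σ ∈ (0,1), a, b > 0, x ∈ M, d ∈ T_xM and w ∈ ∂_M φ(x) be such that ⟨w, d⟩ ≤ −a‖d‖² and ‖w‖ ≤ b‖d‖. Then there exists t > 0 such that φ(R_x(τ d)) ≤ φ(x) + σ τ ⟨w, d⟩ for all τ ∈ (0, t). -/
open Set Filter Topology

noncomputable section

variable {E : Type*} [NormedAddCommGroup E] [InnerProductSpace ℝ E] [FiniteDimensional ℝ E]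

/-- A retraction on the submanifold `M` with tangent spaces `T`: a `C²` map on the
tangent bundle with values in `M` such that `R_x(0) = x` and `DR_x(0) = id`. -/
structure Retraction (M : Set E) (T : E → Submodule ℝ E) where
  R : E → E → E
  mem_target : ∀ x ∈ M, ∀ ξ ∈ T x, R x ξ ∈ M
  map_zero : ∀ x ∈ M, R x 0 = x
  smooth : ContDiffOn ℝ 2 (fun p : E × E => R p.1 p.2) {p : E × E | p.1 ∈ M ∧ p.2 ∈ T p.1}
  deriv_id : ∀ x ∈ M, ∀ ξ ∈ T x, HasDerivAt (fun t : ℝ => R x (t • ξ)) ξ 0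

/-- Assumption A1: a local nonsmooth descent property of `φ` along the retraction,
together with local boundedness of the projectional subdifferential on `M`. -/
def AssumptionA1 (M : Set E) (T : E → Submodule ℝ E) (Ret : Retraction M T) (φ : E → ℝ) : Prop :=
  (∀ z ∈ M, ∃ κ > (0:ℝ), ∃ r > (0:ℝ), ∃ O : Set E, IsOpen O ∧ z ∈ O ∧
    ∀ x ∈ M ∩ O, ∀ ξ ∈ T x, ‖ξ‖ ≤ r → ∀ w ∈ projSubdiff φ M T x,
      φ (Ret.R x ξ) - (φ x + (inner ℝ w ξ : ℝ)) ≤ κ * ‖ξ‖ ^ 2) ∧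
  (∀ z ∈ M, ∃ ρ > (0:ℝ), ∃ c : ℝ, ∀ x ∈ M, ‖x - z‖ < ρ →
    ∀ w ∈ projSubdiff φ M T x, ‖w‖ ≤ c)

/-! A1 gives the quadratic upper model `φ (R_x (τ d)) ≤ φ x + τ ⟪w, d⟫ + κ τ² ‖d‖²`. Since
`⟪w, d⟫ ≤ -a ‖d‖²`, the quadratic term is absorbed by the fraction `1 - σ` of the linear decrease
as soon as `κ τ ≤ (1 - σ) a`. -/

theorem eventually_armijo_of_quadratic_upper_bound {h : ℝ → ℝ} {h₀ s n κ a σ : ℝ}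
    (hκ : 0 < κ) (ha : 0 < a) (hσ : σ < 1) (hn : 0 ≤ n) (hs : s ≤ -a * n)
    (hbound : ∀ᶠ τ in 𝓝[>] (0:ℝ), h τ ≤ h₀ + τ * s + κ * τ ^ 2 * n) :
    ∀ᶠ τ in 𝓝[>] (0:ℝ), h τ ≤ h₀ + σ * τ * s := by
  have hσ' : 0 < 1 - σ := sub_pos.mpr hσ
  have hsmall : ∀ᶠ τ in 𝓝[>] (0:ℝ), κ * τ ≤ (1 - σ) * a := by
    have hpos : (0:ℝ) < (1 - σ) * a / κ := by positivity
    filter_upwards [nhdsWithin_le_nhds (Iio_mem_nhds hpos)] with τ hτ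
    exact (le_div_iff₀' hκ).mp hτ.le
  filter_upwards [hbound, hsmall, self_mem_nhdsWithin] with τ hτ hκτ (hτpos : 0 < τ)
  have hdecrease : (1 - σ) * τ * s ≤ -((1 - σ) * a) * τ * n := by
    have := mul_le_mul_of_nonneg_left hs (mul_nonneg hσ'.le hτpos.le)
    linarith
  have hquad : κ * τ ^ 2 * n ≤ (1 - σ) * a * τ * n := by
    have := mul_le_mul_of_nonneg_right hκτ (mul_nonneg hτpos.le hn)
    linarith
  linarith

theorem AssumptionA1.exists_quadratic_upper_bound_along_ray {M : Set E}
    {T : E → Submodule ℝ E} {Ret : Retraction M T} {φ : E → ℝ} (hA1 : AssumptionA1 M T Ret φ)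
    {x d w : E} (hx : x ∈ M) (hd : d ∈ T x) (hw : w ∈ projSubdiff φ M T x) :
    ∃ κ > (0:ℝ), ∀ᶠ τ in 𝓝 (0:ℝ),
      φ (Ret.R x (τ • d)) ≤ φ x + τ * (inner ℝ w d : ℝ) + κ * τ ^ 2 * ‖d‖ ^ 2 := by
  obtain ⟨κ, hκ, r, hr, O, -, hxO, hdescent⟩ := hA1.1 x hx
  refine ⟨κ, hκ, ?_⟩
  have hray : Tendsto (fun τ : ℝ => τ • d) (𝓝 0) (𝓝 0) := by
    simpa using (tendsto_id (x := 𝓝 (0:ℝ))).smul_const d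
  filter_upwards [hray (Metric.closedBall_mem_nhds 0 hr)] with τ hτ
  have := hdescent x ⟨hx, hxO⟩ (τ • d) (Submodule.smul_mem _ τ hd)
    (by simpa using hτ) w hw
  rw [real_inner_smul_right, norm_smul, mul_pow, Real.norm_eq_abs, sq_abs] at this
  linarith

theorem stmt4_general (M : Set E) (T : E → Submodule ℝ E)
    (Ret : Retraction M T) (φ : E → ℝ) (hA1 : AssumptionA1 M T Ret φ)
    (σ a : ℝ) (hσ : σ ∈ Set.Ioo (0:ℝ) 1) (ha : 0 < a)
    (x : E) (hx : x ∈ M) (d : E) (hd : d ∈ T x)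
    (w : E) (hw : w ∈ projSubdiff φ M T x)
    (hwd : (inner ℝ w d : ℝ) ≤ -a * ‖d‖ ^ 2) :
    ∃ t > (0:ℝ), ∀ τ : ℝ, 0 < τ → τ < t →
      φ (Ret.R x (τ • d)) ≤ φ x + σ * τ * (inner ℝ w d : ℝ) := by
  obtain ⟨κ, hκ, hbound⟩ := hA1.exists_quadratic_upper_bound_along_ray hx hd hw
  have harmijo := eventually_armijo_of_quadratic_upper_bound hκ ha hσ.2 (sq_nonneg ‖d‖) hwd
    (nhdsWithin_le_nhds hbound)
  obtain ⟨t, ht, hsub⟩ := mem_nhdsGT_iff_exists_Ioo_subset.mp harmijo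
  exact ⟨t, ht, fun τ hτ hτt => hsub ⟨hτ, hτt⟩⟩

/-- The Armijo-type linesearch condition holds for all sufficiently small stepsizes. -/
theorem stmt4 (M : Set E) (T : E → Submodule ℝ E) (hM : IsSubmanifold M T)
    (Ret : Retraction M T) (φ : E → ℝ) (hA1 : AssumptionA1 M T Ret φ)
    (σ a b : ℝ) (hσ : σ ∈ Set.Ioo (0:ℝ) 1) (ha : 0 < a) (hb : 0 < b)
    (x : E) (hx : x ∈ M) (d : E) (hd : d ∈ T x)
    (w : E) (hw : w ∈ projSubdiff φ M T x)
    (hwd : (inner ℝ w d : ℝ) ≤ -a * ‖d‖ ^ 2) (hwb : ‖w‖ ≤ b * ‖d‖) :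
    ∃ t > (0:ℝ), ∀ τ : ℝ, 0 < τ → τ < t →
      φ (Ret.R x (τ • d)) ≤ φ x + σ * τ * (inner ℝ w d : ℝ) :=
  stmt4_general M T Ret φ hA1 σ a hσ ha x hx d hd w hw hwd

end
end

section
/- Under the standing hypotheses, define δ_k := −σ τ_k ⟨w^k, d^k⟩ for each k. Then δ_k ≥ σ a τ_k ‖d^k‖² ≥ 0 and φ(x^{k+1}) + (1 − p_{k+1}) δ_k ≤ R_{k+1} ≤ R_k − p_{k+1} δ_k for all k ∈ ℕ. -/
open Set Filter Topology

noncomputable section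

variable {E : Type*} [NormedAddCommGroup E] [InnerProductSpace ℝ E] [FiniteDimensional ℝ E]

/-- A run of the nonmonotone subgradient method on the manifold `M`:
subgradients `w k`, directions `d k`, stepsizes `τ k` obtained by backtracking
from initial trial stepsizes `τhat k` (with `j k` backtracking steps), iterates
`x k` and reference values `Rv k` updated by the mean-rule with weights `p k`. -/
structure AlgSeq (M : Set E) (T : E → Submodule ℝ E) (Ret : Retraction M T) (φ : E → ℝ)
    (σ β τmin τmax pmin a b : ℝ) where
  x : ℕ → E
  w : ℕ → E
  d : ℕ → E
  τhat : ℕ → ℝ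
  j : ℕ → ℕ
  τ : ℕ → ℝ
  p : ℕ → ℝ
  Rv : ℕ → ℝ
  x_mem : ∀ k, x k ∈ M
  w_mem : ∀ k, w k ∈ projSubdiff φ M T (x k)
  w_ne : ∀ k, w k ≠ 0
  d_mem : ∀ k, d k ∈ T (x k)
  d_ne : ∀ k, d k ≠ 0
  descent : ∀ k, (inner ℝ (w k) (d k) : ℝ) ≤ -a * ‖d k‖ ^ 2
  dir_bound : ∀ k, ‖w k‖ ≤ b * ‖d k‖
  τhat_mem : ∀ k, τhat k ∈ Set.Icc τmin τmax
  τ_def : ∀ k, τ k = β ^ (j k) * τhat k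
  j_least : ∀ k, IsLeast {i : ℕ |
      φ (Ret.R (x k) ((β ^ i * τhat k) • d k)) ≤
        Rv k + σ * (β ^ i * τhat k) * (inner ℝ (w k) (d k) : ℝ)} (j k)
  x_succ : ∀ k, x (k + 1) = Ret.R (x k) (τ k • d k)
  p_mem : ∀ k, p (k + 1) ∈ Set.Icc pmin 1
  R_zero : Rv 0 = φ (x 0)
  R_succ : ∀ k, Rv (k + 1) = (1 - p (k + 1)) * Rv k + p (k + 1) * φ (x (k + 1))

/-! The step accepted by the backtracking test satisfies `φ(x^{k+1}) ≤ R_k - δ_k`, and `R_{k+1}` is a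
convex combination of `R_k` and `φ(x^{k+1})`; both bounds on `R_{k+1}` follow from this alone. -/

lemma add_one_sub_mul_le_mean_update {R f p δ : ℝ} (hf : f ≤ R - δ) (hp : p ≤ 1) :
    f + (1 - p) * δ ≤ (1 - p) * R + p * f := by
  nlinarith [mul_le_mul_of_nonneg_left hf (sub_nonneg.mpr hp)]

lemma mean_update_le_sub_mul {R f p δ : ℝ} (hf : f ≤ R - δ) (hp : 0 ≤ p) :
    (1 - p) * R + p * f ≤ R - p * δ := by
  nlinarith [mul_le_mul_of_nonneg_left hf hp]

namespace AlgSeq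

variable {M : Set E} {T : E → Submodule ℝ E} {Ret : Retraction M T} {φ : E → ℝ}
  {σ β τmin τmax pmin a b : ℝ} (A : AlgSeq M T Ret φ σ β τmin τmax pmin a b)

lemma τ_pos (hβ : 0 < β) (hτmin : 0 < τmin) (k : ℕ) : 0 < A.τ k := by
  rw [A.τ_def k]
  exact mul_pos (pow_pos hβ _) (hτmin.trans_le (A.τhat_mem k).1)

lemma φ_succ_le_Rv_add (k : ℕ) :
    φ (A.x (k + 1)) ≤ A.Rv k + σ * A.τ k * (inner ℝ (A.w k) (A.d k) : ℝ) := by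
  rw [A.x_succ k, A.τ_def k]
  exact (A.j_least k).1

lemma mul_sq_norm_le_neg_mul_inner {c : ℝ} (hc : 0 ≤ c) (k : ℕ) :
    c * a * ‖A.d k‖ ^ 2 ≤ -(c * (inner ℝ (A.w k) (A.d k) : ℝ)) := by
  nlinarith [mul_le_mul_of_nonneg_left (A.descent k) hc]

end AlgSeq

theorem stmt5_general
    (M : Set E) (T : E → Submodule ℝ E) (Ret : Retraction M T) (φ : E → ℝ)
    (σ β τmin τmax pmin a b : ℝ)
    (hσ : σ ∈ Set.Ioo (0:ℝ) 1) (hβ : β ∈ Set.Ioo (0:ℝ) 1)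
    (hτmin : 0 < τmin)
    (hpmin : pmin ∈ Set.Ioc (0:ℝ) 1) (ha : 0 < a)
    (A : AlgSeq M T Ret φ σ β τmin τmax pmin a b)
    :
    ∀ k : ℕ,
      σ * a * A.τ k * ‖A.d k‖ ^ 2 ≤ -(σ * A.τ k * (inner ℝ (A.w k) (A.d k) : ℝ)) ∧
      0 ≤ σ * a * A.τ k * ‖A.d k‖ ^ 2 ∧
      φ (A.x (k + 1)) + (1 - A.p (k + 1)) * (-(σ * A.τ k * (inner ℝ (A.w k) (A.d k) : ℝ)))
        ≤ A.Rv (k + 1) ∧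
      A.Rv (k + 1) ≤ A.Rv k - A.p (k + 1) * (-(σ * A.τ k * (inner ℝ (A.w k) (A.d k) : ℝ))) := by
  intro k
  have hτ := A.τ_pos hβ.1 hτmin k
  have hφ : φ (A.x (k + 1)) ≤ A.Rv k - -(σ * A.τ k * (inner ℝ (A.w k) (A.d k) : ℝ)) := by
    rw [sub_neg_eq_add]
    exact A.φ_succ_le_Rv_add k
  have hp := A.p_mem k
  rw [A.R_succ k]
  refine ⟨by linarith [A.mul_sq_norm_le_neg_mul_inner (mul_pos hσ.1 hτ).le k],
    by have := hσ.1; positivity, add_one_sub_mul_le_mean_update hφ hp.2,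
    mean_update_le_sub_mul hφ (hpmin.1.le.trans hp.1)⟩

/-- Basic descent estimates for the reference values, with
`δ_k := -σ τ_k ⟨w^k, d^k⟩`. -/
theorem stmt5
    (M : Set E) (T : E → Submodule ℝ E) (Ret : Retraction M T) (φ : E → ℝ)
    (σ β τmin τmax pmin a b : ℝ)
    (hσ : σ ∈ Set.Ioo (0:ℝ) 1) (hβ : β ∈ Set.Ioo (0:ℝ) 1)
    (hτmin : 0 < τmin) (hττ : τmin ≤ τmax)
    (hpmin : pmin ∈ Set.Ioc (0:ℝ) 1) (ha : 0 < a) (hb : 0 < b)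
    (hM : IsSubmanifold M T)
    (hφcont : ContinuousOn φ M)
    (hφbdd : BddBelow (φ '' M))
    (hA1 : AssumptionA1 M T Ret φ)
    (A : AlgSeq M T Ret φ σ β τmin τmax pmin a b)
    :
    ∀ k : ℕ,
      σ * a * A.τ k * ‖A.d k‖ ^ 2 ≤ -(σ * A.τ k * (inner ℝ (A.w k) (A.d k) : ℝ)) ∧
      0 ≤ σ * a * A.τ k * ‖A.d k‖ ^ 2 ∧
      φ (A.x (k + 1)) + (1 - A.p (k + 1)) * (-(σ * A.τ k * (inner ℝ (A.w k) (A.d k) : ℝ)))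
        ≤ A.Rv (k + 1) ∧
      A.Rv (k + 1) ≤ A.Rv k - A.p (k + 1) * (-(σ * A.τ k * (inner ℝ (A.w k) (A.d k) : ℝ))) :=
  stmt5_general M T Ret φ σ β τmin τmax pmin a b hσ hβ hτmin hpmin ha A

end
end

section
/- Let {s_k} ⊆ [0, ∞) be a monotonically decreasing sequence with s_k → 0, and suppose there exist constants α, β > 0 such that s_k^α ≤ β(s_k − s_{k+1}) for all sufficiently large k. Then: (a) if α ∈ (0, 1], the sequence {s_k} converges Q-linearly to zero with rate 1 − 1/β, i.e. s_{k+1} ≤ (1 − 1/β) s_k for all sufficiently large k; (b) if α > 1, there exists a constant η > 0 such that s_k ≤ η k^{−1/(α−1)} for all sufficiently large k. -/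
/-! For `α ≤ 1` and `s_k ≤ 1` one has `s_k ≤ s_k ^ α`, so the hypothesis already gives
`s_k - s_{k+1} ≥ s_k / β`. For `α > 1` the potential is `s_k ^ (1 - α)`: by convexity of
`t ↦ t ^ (1 - α)` its increment from `s_k` to `s_{k+1}` is at least
`(α - 1) s_k ^ (-α) (s_k - s_{k+1}) ≥ (α - 1) / β`, so it grows linearly in `k`, and inverting
gives `s_k = O(k ^ (-1 / (α - 1)))`. -/

open Filter Topology Real

/-- Tangent line inequality for the convex function `t ↦ t ^ p`, `p ≤ 0`, on `(0, ∞)`. -/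
lemma rpow_add_mul_rpow_sub_one_mul_sub_le {p x y : ℝ} (hp : p ≤ 0) (hy : 0 < y) (hyx : y ≤ x) :
    x ^ p + p * x ^ (p - 1) * (y - x) ≤ y ^ p := by
  have hpos : ∀ t ∈ Set.Icc y x, t ≠ 0 := fun t ht => (hy.trans_le ht.1).ne'
  have hderiv : ∀ t ∈ interior (Set.Icc y x), deriv (fun t : ℝ => t ^ p) t ≤ p * x ^ (p - 1) := by
    intro t ht
    rw [interior_Icc] at ht
    rw [Real.deriv_rpow_const]
    exact mul_le_mul_of_nonpos_left
      (rpow_le_rpow_of_nonpos (hy.trans ht.1) ht.2.le (by linarith)) hp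
  have := (convex_Icc y x).image_sub_le_mul_sub_of_deriv_le
    (continuousOn_id.rpow_const fun t ht => Or.inl (hpos t ht))
    (fun t ht => (differentiableAt_rpow_const_of_ne p
      (hpos t (interior_subset ht))).differentiableWithinAt) hderiv
    y ⟨le_rfl, hyx⟩ x ⟨hyx, le_rfl⟩ hyx
  simp only [id] at this
  linarith

section DecreaseCondition

variable {α β x y : ℝ}

lemma le_of_rpow_le_mul_sub (hβ : 0 < β) (hx : 0 ≤ x) (h : x ^ α ≤ β * (x - y)) : y ≤ x := by
  have := (rpow_nonneg hx α).trans h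
  nlinarith

lemma le_one_sub_inv_mul_of_rpow_le_mul_sub (hα : α ≤ 1) (hβ : 0 < β) (hx₀ : 0 ≤ x)
    (hx₁ : x ≤ 1) (h : x ^ α ≤ β * (x - y)) : y ≤ (1 - 1 / β) * x := by
  have hx : x ≤ β * (x - y) := (self_le_rpow_of_le_one hx₀ hx₁ hα).trans h
  have : x / β ≤ x - y := by rwa [div_le_iff₀ hβ, mul_comm]
  calc y ≤ x - x / β := by linarith
    _ = (1 - 1 / β) * x := by ring

lemma rpow_one_sub_add_le_of_rpow_le_mul_sub (hα : 1 ≤ α) (hβ : 0 < β) (hx : 0 ≤ x) (hy : 0 < y)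
    (h : x ^ α ≤ β * (x - y)) : x ^ (1 - α) + (α - 1) / β ≤ y ^ (1 - α) := by
  have hyx := le_of_rpow_le_mul_sub hβ hx h
  have hx' : 0 < x := hy.trans_le hyx
  have tangent := rpow_add_mul_rpow_sub_one_mul_sub_le (p := 1 - α) (by linarith) hy hyx
  rw [show 1 - α - 1 = -α by ring, rpow_neg hx'.le] at tangent
  have hdecr : 1 / β ≤ (x ^ α)⁻¹ * (x - y) := by
    rw [inv_mul_eq_div, div_le_div_iff₀ hβ (rpow_pos_of_pos hx' α)]
    linarith
  have := mul_le_mul_of_nonneg_left hdecr (sub_nonneg.mpr hα)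
  calc x ^ (1 - α) + (α - 1) / β = x ^ (1 - α) + (α - 1) * (1 / β) := by ring
    _ ≤ x ^ (1 - α) + (α - 1) * ((x ^ α)⁻¹ * (x - y)) := by linarith
    _ = x ^ (1 - α) + (1 - α) * (x ^ α)⁻¹ * (y - x) := by ring
    _ ≤ y ^ (1 - α) := tangent

lemma le_rpow_of_le_rpow_one_sub (hα : 1 < α) (hx : 0 < x) (hy : 0 < y) (h : y ≤ x ^ (1 - α)) :
    x ≤ y ^ (-(1 / (α - 1))) := by
  have hexp : -(1 / (α - 1)) = (1 - α)⁻¹ := by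
    rw [one_div, ← inv_neg, neg_sub]
  rw [hexp, le_rpow_inv_iff_of_neg hx hy (by linarith)]
  exact h

end DecreaseCondition

section Sequence

variable {s : ℕ → ℝ} {α β : ℝ} {N₀ : ℕ}

theorem exists_le_one_sub_inv_mul_of_rpow_le_mul_sub (hnonneg : ∀ k, 0 ≤ s k)
    (hlim : Tendsto s atTop (𝓝 0)) (hα : α ≤ 1) (hβ : 0 < β)
    (h : ∀ k ≥ N₀, s k ^ α ≤ β * (s k - s (k + 1))) :
    ∃ N : ℕ, ∀ k ≥ N, s (k + 1) ≤ (1 - 1 / β) * s k := by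
  obtain ⟨M, hM⟩ := eventually_atTop.mp (hlim.eventually (ge_mem_nhds one_pos))
  exact ⟨max N₀ M, fun k hk => le_one_sub_inv_mul_of_rpow_le_mul_sub hα hβ (hnonneg k)
    (hM k (le_of_max_le_right hk)) (h k (le_of_max_le_left hk))⟩

-- The guard `0 < s k` is needed since `0 ^ (1 - α) = 0` in Lean, not `∞`.
lemma mul_sub_le_rpow_one_sub_of_rpow_le_mul_sub (hnonneg : ∀ k, 0 ≤ s k) (hα : 1 ≤ α)
    (hβ : 0 < β) (h : ∀ k ≥ N₀, s k ^ α ≤ β * (s k - s (k + 1))) :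
    ∀ k ≥ N₀, 0 < s k → (α - 1) / β * (k - N₀) ≤ s k ^ (1 - α) := by
  intro k hk
  induction k, hk using Nat.le_induction with
  | base => intro hpos; simpa using (rpow_pos_of_pos hpos _).le
  | succ k hk ih =>
    intro hpos
    have hk' : 0 < s k := hpos.trans_le (le_of_rpow_le_mul_sub hβ (hnonneg k) (h k hk))
    have hstep := rpow_one_sub_add_le_of_rpow_le_mul_sub hα hβ (hnonneg k) hpos (h k hk)
    calc (α - 1) / β * ((k + 1 : ℕ) - N₀ : ℝ) = (α - 1) / β * (k - N₀) + (α - 1) / β := by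
          push_cast; ring
      _ ≤ s k ^ (1 - α) + (α - 1) / β := by linarith [ih hk']
      _ ≤ s (k + 1) ^ (1 - α) := hstep

theorem exists_le_mul_rpow_of_rpow_le_mul_sub (hnonneg : ∀ k, 0 ≤ s k) (hα : 1 < α)
    (hβ : 0 < β) (h : ∀ k ≥ N₀, s k ^ α ≤ β * (s k - s (k + 1))) :
    ∃ η > (0:ℝ), ∃ N : ℕ, ∀ k ≥ N, s k ≤ η * (k : ℝ) ^ (-(1 / (α - 1))) := by
  set c := (α - 1) / β
  have hc : 0 < c / 2 := half_pos (div_pos (by linarith) hβ)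
  refine ⟨(c / 2) ^ (-(1 / (α - 1))), rpow_pos_of_pos hc _, 2 * N₀ + 1, fun k hk => ?_⟩
  rcases (hnonneg k).eq_or_lt with hzero | hpos
  · rw [← hzero]
    exact mul_nonneg (rpow_nonneg hc.le _) (rpow_nonneg k.cast_nonneg _)
  have hk' : (2 * N₀ + 1 : ℝ) ≤ k := by exact_mod_cast hk
  have hgrowth : c / 2 * k ≤ s k ^ (1 - α) := calc
    c / 2 * k ≤ c * (k - N₀) := by nlinarith
    _ ≤ s k ^ (1 - α) :=
      mul_sub_le_rpow_one_sub_of_rpow_le_mul_sub hnonneg hα.le hβ h k (by omega) hpos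
  rw [← mul_rpow hc.le k.cast_nonneg]
  exact le_rpow_of_le_rpow_one_sub hα hpos (mul_pos hc (by linarith)) hgrowth

end Sequence

theorem stmt19_general (s : ℕ → ℝ) (hnonneg : ∀ k, 0 ≤ s k)
    (hlim : Tendsto s atTop (𝓝 0))
    (α β : ℝ) (hβ : 0 < β)
    (h : ∃ N : ℕ, ∀ k ≥ N, s k ^ α ≤ β * (s k - s (k + 1))) :
    (α ≤ 1 → ∃ N : ℕ, ∀ k ≥ N, s (k + 1) ≤ (1 - 1 / β) * s k) ∧
    (1 < α → ∃ η > (0:ℝ), ∃ N : ℕ, ∀ k ≥ N,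
      s k ≤ η * (k : ℝ) ^ (-(1 / (α - 1)))) := by
  obtain ⟨N, hN⟩ := h
  exact ⟨fun hα => exists_le_one_sub_inv_mul_of_rpow_le_mul_sub hnonneg hlim hα hβ hN,
    fun hα => exists_le_mul_rpow_of_rpow_le_mul_sub hnonneg hα hβ hN⟩

/-- Rates of convergence for nonnegative decreasing null sequences satisfying
`s_k ^ α ≤ β (s_k - s_{k+1})`: Q-linear convergence if `α ∈ (0, 1]`, and
the sublinear rate `s_k ≤ η k^{-1/(α-1)}` if `α > 1`. -/
theorem stmt19 (s : ℕ → ℝ) (hnonneg : ∀ k, 0 ≤ s k) (hanti : Antitone s)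
    (hlim : Tendsto s atTop (𝓝 0))
    (α β : ℝ) (hα : 0 < α) (hβ : 0 < β)
    (h : ∃ N : ℕ, ∀ k ≥ N, s k ^ α ≤ β * (s k - s (k + 1))) :
    (α ≤ 1 → ∃ N : ℕ, ∀ k ≥ N, s (k + 1) ≤ (1 - 1 / β) * s k) ∧
    (1 < α → ∃ η > (0:ℝ), ∃ N : ℕ, ∀ k ≥ N,
      s k ≤ η * (k : ℝ) ^ (-(1 / (α - 1)))) :=
  stmt19_general s hnonneg hlim α β hβ h
end
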